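/- arXiv:1302.1742 — 2 statements merged into one kernel-verified Lean document; each statement's English description precedes it below -/
import Mathlib

section
/- Let S be a discrete semigroup and φ a proper filter on S. The closed set R = { p ∈ βS : φ ⊆ p } is a right ideal of βS if and only if for every A ∈ φ and every ultrafilter p on S, Ω_p(A) := { s : s⁻¹A ∈ p } ∈ φ. -/
attribute [local instance] Ultrafilter.mul Ultrafilter.semigroup

theorem Ultrafilter.mem_mul_iff {M : Type*} [Mul M] (p q : Ultrafilter M) (A : Set M) :
    A ∈ p * q ↔ {s : M | {t : M | s * t ∈ A} ∈ q} ∈ p :=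
  Ultrafilter.eventually_mul p q (· ∈ A)

theorem right_ideal_iff_omega_general {S : Type*} [Semigroup S] (φ : Filter S) :
    (∀ p q : Ultrafilter S, ↑p ≤ φ → ↑(p * q) ≤ φ) ↔
      ∀ A : Set S, A ∈ φ → ∀ p : Ultrafilter S,
        {s : S | {t : S | s * t ∈ A} ∈ p} ∈ φ := by
  constructor
  · intro hR A hA p
    exact Filter.mem_iff_ultrafilter.2 fun r hr => (r.mem_mul_iff p A).1 (hR r p hr hA)
  · intro hΩ p q hp A hA
    exact (p.mem_mul_iff q A).2 (hp (hΩ A hA q))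

theorem right_ideal_iff_omega {S : Type*} [Semigroup S] (φ : Filter S) [φ.NeBot] :
    (∀ p q : Ultrafilter S, ↑p ≤ φ → ↑(p * q) ≤ φ) ↔
      ∀ A : Set S, A ∈ φ → ∀ p : Ultrafilter S,
        {s : S | {t : S | s * t ∈ A} ∈ p} ∈ φ :=
  right_ideal_iff_omega_general φ
end

section
/- Let S be a discrete semigroup. An ultrafilter p on S belongs to the closure of the smallest ideal K of βS if and only if every A ∈ p is piecewise syndetic. -/
attribute [local instance] Ultrafilter.mul Ultrafilter.semigroup

/-- `J` is a (nonempty) two-sided ideal of `βS`. -/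
def IsIdealBS {S : Type*} [Semigroup S] (J : Set (Ultrafilter S)) : Prop :=
  J.Nonempty ∧ ∀ p ∈ J, ∀ q : Ultrafilter S, q * p ∈ J ∧ p * q ∈ J

/-- `K` is the smallest two-sided ideal of `βS`. -/
def IsSmallestIdealBS {S : Type*} [Semigroup S] (K : Set (Ultrafilter S)) : Prop :=
  IsIdealBS K ∧ ∀ J : Set (Ultrafilter S), IsIdealBS J → K ⊆ J

/-- `B ⊆ S` is syndetic. -/
def SyndeticIn {S : Type*} [Semigroup S] (B : Set S) : Prop :=
  ∃ F : Finset S, ∀ t : S, ∃ s ∈ F, s * t ∈ B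

/-- `A ⊆ S` is piecewise syndetic. -/
def PiecewiseSyndeticIn {S : Type*} [Semigroup S] (A : Set S) : Prop :=
  ∃ F : Finset S, ∀ G : Finset S,
    (⋂ s ∈ G, {t : S | ∃ u ∈ F, u * (s * t) ∈ A}).Nonempty

/-!
Call an ultrafilter piecewise syndetic if all of its members are. These ultrafilters form a
two-sided ideal of `βS`: a member `A` of `x * p` has a translate `s⁻¹A ∈ p`, a member `A` of
`p * y` has `{s | s⁻¹A ∈ y} ∈ p`, and piecewise syndeticity passes from either set back to `A`.
The ideal is nonempty because it contains every minimal closed left ideal `L`: for `l ∈ L` and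
`B ∈ l`, minimality gives `L = βS * (x * l)` for every `x`, so every `x * l` contains some `s⁻¹B`,
and compactness of `βS` lets finitely many `s` suffice. Hence `K` lies in this ideal.

Conversely, `A` is piecewise syndetic iff some ultrafilter `r` contains `s⁻¹D` for every `s`, where
`D = ⋃_{u ∈ F} u⁻¹A` for a finite `F`. Then `D ∈ q * r` for any `q ∈ K`, so `A ∈ u * q * r ∈ K` for
some `u ∈ F`.
-/

theorem Ultrafilter.mem_closure_iff {α : Type*} {K : Set (Ultrafilter α)} {p : Ultrafilter α} :
    p ∈ closure K ↔ ∀ A ∈ p, ∃ q ∈ K, A ∈ q := by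
  simp [ultrafilterBasis_is_basis.mem_closure_iff, ultrafilterBasis, Set.Nonempty, and_comm]

theorem Ultrafilter.mem_pure_mul {S : Type*} [Mul S] {A : Set S} {u : S} {m : Ultrafilter S} :
    A ∈ pure u * m ↔ {t : S | u * t ∈ A} ∈ m :=
  Iff.rfl

theorem Ultrafilter.exists_forall_mem_of_finset_iInter_nonempty {ι α : Type*} (C : ι → Set α)
    (hC : ∀ G : Finset ι, (⋂ i ∈ G, C i).Nonempty) : ∃ r : Ultrafilter α, ∀ i, C i ∈ r := by
  classical
  obtain ⟨r, hr⟩ := Ultrafilter.exists_ultrafilter_of_finite_inter_nonempty (Set.range C) <| by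
    intro T hT
    rw [← Set.image_univ, Finset.subset_set_image_iff] at hT
    obtain ⟨G, -, rfl⟩ := hT
    simpa [Set.sInter_image] using hC G
  exact ⟨r, fun i => hr ⟨i, rfl⟩⟩

section ClosedLeftIdeal

variable {M : Type*} [TopologicalSpace M]

def IsClosedLeftIdeal [Mul M] (L : Set M) : Prop :=
  L.Nonempty ∧ IsClosed L ∧ ∀ x, ∀ l ∈ L, x * l ∈ L

theorem isClosedLeftIdeal_range_mul_right [Semigroup M] [CompactSpace M] [T2Space M]
    (hcont : ∀ r : M, Continuous (· * r)) (m : M) :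
    IsClosedLeftIdeal (Set.range (· * m)) :=
  ⟨⟨m * m, m, rfl⟩, (isCompact_range (hcont m)).isClosed,
    fun x _ ⟨y, hy⟩ => ⟨x * y, by simp only [← hy, mul_assoc]⟩⟩

theorem exists_minimal_isClosedLeftIdeal [Mul M] [CompactSpace M] [Nonempty M] :
    ∃ L : Set M, Minimal IsClosedLeftIdeal L := by
  suffices ∀ c ⊆ {L : Set M | IsClosedLeftIdeal L}, IsChain (· ⊆ ·) c → c.Nonempty →
      ∃ L ∈ {L : Set M | IsClosedLeftIdeal L}, ∀ C ∈ c, L ⊆ C by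
    obtain ⟨L, -, hL⟩ := zorn_superset_nonempty _ this Set.univ
      ⟨Set.univ_nonempty, isClosed_univ, fun _ _ _ => trivial⟩
    exact ⟨L, hL⟩
  intro c hc hchain ⟨C₀, hC₀⟩
  have : Nonempty c := ⟨⟨C₀, hC₀⟩⟩
  refine ⟨⋂₀ c, ⟨?_, isClosed_sInter fun C hC => (hc hC).2.1, ?_⟩,
    fun _ => Set.sInter_subset_of_mem⟩
  · exact IsCompact.nonempty_sInter_of_directed_nonempty_isCompact_isClosed
      (IsChain.directedOn hchain.symm) (fun C hC => (hc hC).1) (fun C hC => (hc hC).2.1.isCompact)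
      (fun C hC => (hc hC).2.1)
  · exact fun x l hl => Set.mem_sInter.2 fun C hC => (hc hC).2.2 x l (hl C hC)

theorem range_mul_right_eq_of_minimal [Semigroup M] [CompactSpace M] [T2Space M]
    (hcont : ∀ r : M, Continuous (· * r)) {L : Set M} (hL : Minimal IsClosedLeftIdeal L)
    {m : M} (hm : m ∈ L) : Set.range (· * m) = L :=
  hL.eq_of_subset (isClosedLeftIdeal_range_mul_right hcont m)
    (Set.range_subset_iff.2 fun x => hL.prop.2.2 x m hm)

end ClosedLeftIdeal

section PiecewiseSyndetic

variable {S : Type*} [Semigroup S]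

theorem piecewiseSyndeticIn_iff_exists_ultrafilter {A : Set S} :
    PiecewiseSyndeticIn A ↔ ∃ F : Finset S, ∃ l : Ultrafilter S,
      ∀ s : S, {t : S | ∃ u ∈ F, u * (s * t) ∈ A} ∈ l := by
  refine ⟨fun ⟨F, hF⟩ => ⟨F, Ultrafilter.exists_forall_mem_of_finset_iInter_nonempty _ hF⟩,
    fun ⟨F, l, hl⟩ => ⟨F, fun G => Ultrafilter.nonempty_of_mem (f := l) ?_⟩⟩
  exact (Filter.biInter_finset_mem G).2 fun s _ => hl s

theorem PiecewiseSyndeticIn.of_mul_preimage {A : Set S} (s : S)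
    (h : PiecewiseSyndeticIn {t : S | s * t ∈ A}) : PiecewiseSyndeticIn A := by
  classical
  obtain ⟨F, hF⟩ := h
  refine ⟨F.image (s * ·), fun G => (hF G).mono <| Set.iInter₂_mono fun v _ t ht => ?_⟩
  obtain ⟨u, hu, hA⟩ := ht
  exact ⟨s * u, Finset.mem_image_of_mem _ hu, by rwa [mul_assoc]⟩

theorem PiecewiseSyndeticIn.of_setOf_mul_preimage_mem (y : Ultrafilter S) {A : Set S}
    (h : PiecewiseSyndeticIn {s : S | {t : S | s * t ∈ A} ∈ y}) : PiecewiseSyndeticIn A := by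
  obtain ⟨F, l, hl⟩ := piecewiseSyndeticIn_iff_exists_ultrafilter.1 h
  refine piecewiseSyndeticIn_iff_exists_ultrafilter.2 ⟨F, l * y, fun s => ?_⟩
  show {t | {w | ∃ u ∈ F, u * (s * (t * w)) ∈ A} ∈ y} ∈ l
  refine Filter.mem_of_superset (hl s) fun t ⟨u, hu, hy⟩ => Filter.mem_of_superset hy ?_
  exact fun w hw => ⟨u, hu, by simpa only [Set.mem_ofPred_eq, mul_assoc] using hw⟩

end PiecewiseSyndetic

section SmallestIdeal

variable {S : Type*} [Semigroup S]

variable (S) in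
def piecewiseSyndeticUltrafilters : Set (Ultrafilter S) :=
  {p | ∀ A ∈ p, PiecewiseSyndeticIn A}

theorem mul_mem_piecewiseSyndeticUltrafilters_left (x : Ultrafilter S) {p : Ultrafilter S}
    (hp : p ∈ piecewiseSyndeticUltrafilters S) : x * p ∈ piecewiseSyndeticUltrafilters S := by
  intro A hA
  obtain ⟨s, hs⟩ := Ultrafilter.nonempty_of_mem (show {s | {t | s * t ∈ A} ∈ p} ∈ x from hA)
  exact .of_mul_preimage s (hp _ hs)

theorem mul_mem_piecewiseSyndeticUltrafilters_right {p : Ultrafilter S}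
    (hp : p ∈ piecewiseSyndeticUltrafilters S) (y : Ultrafilter S) :
    p * y ∈ piecewiseSyndeticUltrafilters S :=
  fun _ hA => .of_setOf_mul_preimage_mem y (hp _ hA)

theorem subset_piecewiseSyndeticUltrafilters_of_minimal {L : Set (Ultrafilter S)}
    (hL : Minimal IsClosedLeftIdeal L) : L ⊆ piecewiseSyndeticUltrafilters S := by
  intro l hl B hB
  have hcover : ∀ x : Ultrafilter S, ∃ s : S, {t | s * t ∈ B} ∈ x * l := by
    intro x
    obtain ⟨y, hy⟩ : l ∈ Set.range (· * (x * l)) := by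
      rwa [range_mul_right_eq_of_minimal Ultrafilter.continuous_mul_left hL
        (hL.prop.2.2 x l hl)]
    rw [← hy] at hB
    exact Ultrafilter.nonempty_of_mem hB
  obtain ⟨F, hF⟩ := isCompact_univ.elim_finite_subcover
    (fun s : S => (· * l) ⁻¹' {z | {t | s * t ∈ B} ∈ z})
    (fun s => (ultrafilter_isOpen_basic _).preimage (Ultrafilter.continuous_mul_left l))
    (fun x _ => Set.mem_iUnion.2 (hcover x))
  refine piecewiseSyndeticIn_iff_exists_ultrafilter.2 ⟨F, l, fun v => ?_⟩
  obtain ⟨u, hu, huv⟩ := Set.mem_iUnion₂.1 (hF (Set.mem_univ (pure v)))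
  exact Filter.mem_of_superset (Ultrafilter.mem_pure_mul.1 huv) fun t ht => ⟨u, hu, ht⟩

theorem isIdealBS_piecewiseSyndeticUltrafilters [Nonempty (Ultrafilter S)] :
    IsIdealBS (piecewiseSyndeticUltrafilters S) := by
  obtain ⟨L, hL⟩ := exists_minimal_isClosedLeftIdeal (M := Ultrafilter S)
  obtain ⟨l, hl⟩ := hL.prop.1
  exact ⟨⟨l, subset_piecewiseSyndeticUltrafilters_of_minimal hL hl⟩, fun p hp q =>
    ⟨mul_mem_piecewiseSyndeticUltrafilters_left q hp,
      mul_mem_piecewiseSyndeticUltrafilters_right hp q⟩⟩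

theorem IsSmallestIdealBS.subset_piecewiseSyndeticUltrafilters {K : Set (Ultrafilter S)}
    (hK : IsSmallestIdealBS K) : K ⊆ piecewiseSyndeticUltrafilters S :=
  have : Nonempty (Ultrafilter S) := hK.1.1.to_subtype.map Subtype.val
  hK.2 _ isIdealBS_piecewiseSyndeticUltrafilters

theorem IsIdealBS.exists_mem_of_piecewiseSyndeticIn {J : Set (Ultrafilter S)}
    (hJ : IsIdealBS J) {A : Set S} (hA : PiecewiseSyndeticIn A) : ∃ q ∈ J, A ∈ q := by
  obtain ⟨F, r, hr⟩ := piecewiseSyndeticIn_iff_exists_ultrafilter.1 hA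
  obtain ⟨p, hp⟩ := hJ.1
  have hunion : (⋃ u ∈ (F : Set S), {t | u * t ∈ A}) ∈ p * r := by
    show {s | {t | s * t ∈ ⋃ u ∈ (F : Set S), {t | u * t ∈ A}} ∈ r} ∈ p
    exact Filter.univ_mem' fun s =>
      Filter.mem_of_superset (hr s) fun _ ⟨u, hu, ht⟩ => Set.mem_biUnion (x := u) hu ht
  obtain ⟨u, -, hu⟩ := (Ultrafilter.finite_biUnion_mem_iff F.finite_toSet).1 hunion
  exact ⟨pure u * (p * r), (hJ.2 _ (hJ.2 p hp r).2 (pure u)).1, Ultrafilter.mem_pure_mul.2 hu⟩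

end SmallestIdeal

theorem mem_closure_smallest_ideal_iff {S : Type*} [Semigroup S]
    (K : Set (Ultrafilter S)) (hK : IsSmallestIdealBS K) (p : Ultrafilter S) :
    p ∈ closure K ↔ ∀ A : Set S, A ∈ p → PiecewiseSyndeticIn A := by
  rw [Ultrafilter.mem_closure_iff]
  refine ⟨fun h A hA => ?_, fun h A hA => hK.1.exists_mem_of_piecewiseSyndeticIn (h A hA)⟩
  obtain ⟨q, hqK, hAq⟩ := h A hA
  exact hK.subset_piecewiseSyndeticUltrafilters hqK A hAq
end
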